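/- Suppose x ∈ gᶠ satisfies x_s ∈ tᶠ. Then the set A(x) = {g ∈ Gᶠ : g·x_s ∈ tᶠ} decomposes as a disjoint union over coset representatives: A(x) = ⊔_{w ∈ W/W_{x_s}} ẇ·G_{x_s}ᶠ, where W_{x_s} is the stabilizer of x_s in the Weyl group W and ẇ ∈ Gᶠ are lifts of w. In particular |A(x)| = |W/W_{x_s}| · |G_{x_s}ᶠ|. -/
import Mathlib


open Pointwise

/-- If any element of `t` that is `G`-conjugate to `xs ∈ t` is already
`N`-conjugate to it (where `N` plays the role of `N_G(T)`, with `W = N/T`), and `N`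
preserves `t`, then `A(x) = {g : g • xs ∈ t}` is the union of the cosets `n · G_{xs}`
for `n ∈ N`; in particular `|A(x)| · |N ∩ G_{xs}| = |N| · |G_{xs}|`, i.e.
`|A(x)| = |W/W_{xs}| · |G_{xs}|`. -/
theorem stmt16 {G V : Type*} [Group G] [Finite G] [MulAction G V]
    (t : Set V) (N : Subgroup G) (xs : V) (hxs : xs ∈ t)
    (hstable : ∀ n ∈ N, ∀ y ∈ t, n • y ∈ t)
    (hWconj : ∀ y ∈ t, (∃ g : G, g • xs = y) → ∃ n ∈ N, n • xs = y) :
    ({g : G | g • xs ∈ t} =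
        ⋃ n ∈ (N : Set G), n • (MulAction.stabilizer G xs : Set G)) ∧
    Nat.card {g : G | g • xs ∈ t} *
        Nat.card (N ⊓ MulAction.stabilizer G xs : Subgroup G) =
      Nat.card N * Nat.card (MulAction.stabilizer G xs) := by
  classical
  set S := MulAction.stabilizer G xs with hSdef
  set A : Set G := {g : G | g • xs ∈ t} with hAdef
  have key : ∀ g : G, g • xs ∈ t ↔ ∃ n ∈ N, n⁻¹ * g ∈ S := by
    intro g
    constructor
    · intro hg
      obtain ⟨n, hn, hnx⟩ := hWconj (g • xs) hg ⟨g, rfl⟩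
      refine ⟨n, hn, ?_⟩
      rw [MulAction.mem_stabilizer_iff, mul_smul]
      exact inv_smul_eq_iff.mpr hnx.symm
    · rintro ⟨n, hn, hs⟩
      rw [MulAction.mem_stabilizer_iff, mul_smul] at hs
      rw [inv_smul_eq_iff.mp hs]
      exact hstable n hn xs hxs
  have hset : A = ⋃ n ∈ (N : Set G), n • (S : Set G) := by
    ext g
    simp only [hAdef, Set.mem_setOf_eq, Set.mem_iUnion, exists_prop,
      mem_leftCoset_iff, SetLike.mem_coe]
    exact key g
  refine ⟨hset, ?_⟩
  -- choose a coset representative `f g ∈ N` for each `g` with `g • xs ∈ t`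
  have hchoice : ∀ g : G, ∃ n : G, g • xs ∈ t → (n ∈ N ∧ n⁻¹ * g ∈ S) := by
    intro g
    by_cases hg : g • xs ∈ t
    · obtain ⟨n, hn, hs⟩ := (key g).1 hg
      exact ⟨n, fun _ => ⟨hn, hs⟩⟩
    · exact ⟨1, fun h => absurd h hg⟩
  choose f hf using hchoice
  have hmem : ∀ (n : ↥N) (s : ↥S), ((n : G) * (s : G)) • xs ∈ t := by
    intro n s
    have h2 : (s : G) • xs = xs := s.2
    have : ((n : G) * (s : G)) • xs = (n : G) • xs := by rw [mul_smul, h2]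
    rw [this]
    exact hstable _ n.2 xs hxs
  let e : ↥N × ↥S ≃ ↥A × ↥(N ⊓ S : Subgroup G) :=
  { toFun := fun p =>
      (⟨(p.1 : G) * (p.2 : G), hmem p.1 p.2⟩,
       ⟨(f ((p.1 : G) * (p.2 : G)))⁻¹ * (p.1 : G),
        ⟨mul_mem (N.inv_mem (hf _ (hmem p.1 p.2)).1) p.1.2, by
          have h := S.mul_mem (hf _ (hmem p.1 p.2)).2 (S.inv_mem p.2.2)
          simpa [mul_assoc] using h⟩⟩)
    invFun := fun q =>
      (⟨f (q.1 : G) * (q.2 : G), N.mul_mem (hf _ q.1.2).1 q.2.2.1⟩,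
       ⟨(q.2 : G)⁻¹ * ((f (q.1 : G))⁻¹ * (q.1 : G)),
        S.mul_mem (S.inv_mem q.2.2.2) (hf _ q.1.2).2⟩)
    left_inv := by
      rintro ⟨n, s⟩
      refine Prod.ext (Subtype.ext ?_) (Subtype.ext ?_) <;> dsimp only <;> group
    right_inv := by
      rintro ⟨a, k⟩
      have hval : (f (a : G) * (k : G)) * ((k : G)⁻¹ * ((f (a : G))⁻¹ * (a : G)))
          = (a : G) := by group
      refine Prod.ext (Subtype.ext ?_) (Subtype.ext ?_) <;> dsimp only
      · exact hval
      · rw [hval]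
        group }
  have hcard := Nat.card_congr e
  rw [Nat.card_prod, Nat.card_prod] at hcard
  calc Nat.card ↥A * Nat.card ↥(N ⊓ S : Subgroup G)
      = Nat.card ↥N * Nat.card ↥S := hcard.symm
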